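/- arXiv:1111.4540 — 2 statements merged into one kernel-verified Lean document; each statement's English description precedes it below -/
import Mathlib

section
/- Let $T:(X,\mathcal{X})\to(X,\mathcal{X})$ be a measurable transformation and $\lambda$ a finite measure on $(X,\mathcal{X})$ such that $T_*\lambda \ll \lambda$. Let $\eta$ be a $T$-invariant probability measure with Lebesgue decomposition $\eta = \mu + \xi$ where $\mu \ll \lambda$ and $\xi \perp \lambda$. Then both $\mu$ and $\xi$ are $T$-invariant measures. -/
open MeasureTheory

theorem stmt0 {X : Type*} [MeasurableSpace X] (T : X → X) (hT : Measurable T)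
    (lam : Measure X) [IsFiniteMeasure lam]
    (hlam : lam.map T ≪ lam)
    (eta mu xi : Measure X) [IsProbabilityMeasure eta]
    (hinv : eta.map T = eta)
    (hdecomp : eta = mu + xi) (hac : mu ≪ lam) (hsing : xi ⟂ₘ lam) :
    mu.map T = mu ∧ xi.map T = xi := by
  have hmu_le : mu ≤ eta := hdecomp ▸ Measure.le_add_right le_rfl
  have hxi_le : xi ≤ eta := hdecomp ▸ Measure.le_add_left le_rfl
  haveI : IsFiniteMeasure mu := isFiniteMeasure_of_le eta hmu_le
  haveI : IsFiniteMeasure xi := isFiniteMeasure_of_le eta hxi_le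
  set ν := xi.map T with hν
  -- eta = mu.map T + ν
  have hmap : eta = mu.map T + ν := by
    rw [← hinv, hdecomp, Measure.map_add _ _ hT]
  -- mu.map T ≪ lam
  have hmacT : mu.map T ≪ lam := (hac.map hT).trans hlam
  -- ξ is the singular part of eta wrt lam
  have h1 : xi = eta.singularPart lam := by
    refine Measure.eq_singularPart (Measure.measurable_rnDeriv mu lam) hsing ?_
    rw [Measure.withDensity_rnDeriv_eq mu lam hac, add_comm]; exact hdecomp
  -- ν.singularPart lam is also the singular part of eta wrt lam
  have h2 : ν.singularPart lam = eta.singularPart lam := by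
    refine Measure.eq_singularPart (f := (mu.map T).rnDeriv lam + ν.rnDeriv lam)
      (Measurable.add (Measure.measurable_rnDeriv (mu.map T) lam)
        (Measure.measurable_rnDeriv ν lam))
      (Measure.mutuallySingular_singularPart ν lam) ?_
    rw [withDensity_add_left (Measure.measurable_rnDeriv (mu.map T) lam),
      Measure.withDensity_rnDeriv_eq (mu.map T) lam hmacT]
    calc eta = mu.map T + ν := hmap
      _ = mu.map T + (ν.singularPart lam + lam.withDensity (ν.rnDeriv lam)) := by
          rw [← Measure.haveLebesgueDecomposition_add ν lam]
      _ = ν.singularPart lam + (mu.map T + lam.withDensity (ν.rnDeriv lam)) := by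
          rw [add_comm (mu.map T), add_assoc, add_comm (lam.withDensity (ν.rnDeriv lam))]
  have hxi_le_ν : xi ≤ ν := by
    rw [h1, ← h2]
    exact Measure.singularPart_le ν lam
  have huniv : ν Set.univ = xi Set.univ := by
    rw [hν, Measure.map_apply hT MeasurableSet.univ, Set.preimage_univ]
  -- xi = ν
  have hxieq : xi = ν := by
    ext s hs
    refine le_antisymm (hxi_le_ν s) ?_
    have h3 : ν s + xi sᶜ ≤ xi s + xi sᶜ := by
      have := measure_add_measure_compl (μ := ν) hs
      have h4 := measure_add_measure_compl (μ := xi) hs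
      calc ν s + xi sᶜ ≤ ν s + ν sᶜ := by gcongr
        _ = ν Set.univ := this
        _ = xi Set.univ := huniv
        _ = xi s + xi sᶜ := h4.symm
    exact (ENNReal.add_le_add_iff_right (measure_ne_top xi sᶜ)).mp h3
  constructor
  · ext s hs
    have h5 : mu s + xi s = mu.map T s + xi s := by
      have := hmap
      rw [hdecomp, hxieq] at this
      calc mu s + xi s = (mu + xi) s := (Measure.add_apply mu xi s).symm
        _ = (mu.map T + ν) s := by rw [← hdecomp, hmap]
        _ = mu.map T s + xi s := by rw [Measure.add_apply, ← hxieq]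
    exact ((ENNReal.add_left_inj (measure_ne_top xi s)).mp h5).symm
  · exact hxieq.symm
end

section
/- Let $T:(X,\mathcal{X})\to(X,\mathcal{X})$ be measurable with $T_*\lambda \ll \lambda$ for a finite measure $\lambda$, and let $\eta$ be a $T$-invariant probability with Lebesgue decomposition $\eta = \mu + \xi$, $\mu \ll \lambda$, $\xi \perp \lambda$. If $E \in \mathcal{X}$ satisfies $\lambda(E)=0$ and $\xi(X\setminus E)=0$, then $\xi(E \triangle T^{-1}(E)) = 0$, i.e. $E$ is invariant modulo a $\xi$-null set. -/
open MeasureTheory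
open scoped symmDiff

theorem stmt1 {X : Type*} [MeasurableSpace X] (T : X → X) (hT : Measurable T)
    (lam : Measure X) [IsFiniteMeasure lam]
    (hlam : lam.map T ≪ lam)
    (eta mu xi : Measure X) [IsProbabilityMeasure eta]
    (hinv : eta.map T = eta)
    (hdecomp : eta = mu + xi) (hac : mu ≪ lam) (hsing : xi ⟂ₘ lam)
    (E : Set X) (hE : MeasurableSet E)
    (hlamE : lam E = 0) (hxiE : xi Eᶜ = 0) :
    xi (E ∆ (T ⁻¹' E)) = 0 := by
  have hxi_le : xi ≤ eta := by rw [hdecomp]; exact Measure.le_add_left le_rfl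
  have hxi_fin : ∀ s, xi s ≠ ⊤ := fun s =>
    ne_top_of_le_ne_top (measure_ne_top eta s) (hxi_le s)
  have muE : mu E = 0 := hac hlamE
  have lamTE : lam (T ⁻¹' E) = 0 := by
    have : lam.map T E = 0 := hlam hlamE
    rwa [Measure.map_apply hT hE] at this
  have muTE : mu (T ⁻¹' E) = 0 := hac lamTE
  have hetaE : eta E = xi E := by rw [hdecomp]; simp [muE]
  have hetaTE : eta (T ⁻¹' E) = xi (T ⁻¹' E) := by rw [hdecomp]; simp [muTE]
  have hEeq : eta (T ⁻¹' E) = eta E := by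
    conv_rhs => rw [← hinv]
    rw [Measure.map_apply hT hE]
  have hxiE_eq : xi E = xi Set.univ := by
    have := measure_add_measure_compl (μ := xi) hE
    rw [hxiE, add_zero] at this
    exact this
  have hxiTE : xi (T ⁻¹' E) = xi Set.univ := by
    rw [← hetaTE, hEeq, hetaE, hxiE_eq]
  have hxiTEc : xi (T ⁻¹' E)ᶜ = 0 := by
    have h := measure_add_measure_compl (μ := xi) (hT hE)
    rw [hxiTE] at h
    calc xi (T ⁻¹' E)ᶜ = xi Set.univ + xi (T ⁻¹' E)ᶜ - xi Set.univ := by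
          rw [ENNReal.add_sub_cancel_left (hxi_fin _)]
      _ = 0 := by rw [h, tsub_self]
  have hsub : E ∆ (T ⁻¹' E) ⊆ Eᶜ ∪ (T ⁻¹' E)ᶜ := by
    rw [Set.symmDiff_def]
    exact Set.union_subset (fun x hx => Or.inr hx.2) (fun x hx => Or.inl hx.2)
  refine le_antisymm ?_ zero_le
  calc xi (E ∆ (T ⁻¹' E)) ≤ xi (Eᶜ ∪ (T ⁻¹' E)ᶜ) := measure_mono hsub
    _ = 0 := measure_union_null hxiE hxiTEc
end
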